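/- Power sets exist for well-founded extensional apgs: for any well-founded extensional apg X (on a type in a fixed universe) there exists a well-founded extensional apg P (on a type in the same universe) such that for every well-founded extensional apg W, W ⋿ P if and only if every well-founded extensional apg Z with Z ⋿ W also satisfies Z ⋿ X. -/

import Mathlib

universe u v

/-- A relation is (inductively) well-founded if every inductive subset is the whole type:
`S` is inductive when `x ∈ S` whenever every child of `x` is in `S`. -/
def IsWFRel {X : Type u} (r : X → X → Prop) : Prop :=
  ∀ S : Set X, (∀ x, (∀ y, r y x → y ∈ S) → x ∈ S) → S = Set.univ

/-- A relation is extensional if nodes with the same children are equal. -/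
def IsExtRel {X : Type u} (r : X → X → Prop) : Prop :=
  ∀ x y, (∀ z, r z x ↔ r z y) → x = y

/-- `Below r x` is the full subgraph `X/x` of nodes admitting a (possibly empty) path to `x`. -/
def Below {X : Type u} (r : X → X → Prop) (x : X) : Type u :=
  {z : X // Relation.ReflTransGen r z x}

/-- The induced relation on the subgraph `X/x`. -/
def belowRel {X : Type u} (r : X → X → Prop) (x : X) :
    Below r x → Below r x → Prop :=
  fun a b => r a.1 b.1

/-- The root of the pointed subgraph `X/x`. -/
def belowRoot {X : Type u} (r : X → X → Prop) (x : X) : Below r x :=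
  ⟨x, Relation.ReflTransGen.refl⟩

/-- Isomorphism of pointed graphs: a relation-preserving-and-reflecting bijection
taking the first distinguished point to the second. -/
def PIso {X : Type u} {Y : Type v} (rX : X → X → Prop) (rY : Y → Y → Prop)
    (x : X) (y : Y) : Prop :=
  ∃ f : X ≃ Y, (∀ a b, rX a b ↔ rY (f a) (f b)) ∧ f x = y

/-- A simulation of graphs. -/
def IsSimulation {X : Type u} {Y : Type v} (rX : X → X → Prop)
    (rY : Y → Y → Prop) (f : X → Y) : Prop :=
  (∀ a b, rX a b → rY (f a) (f b)) ∧
  (∀ x y, rY y (f x) → ∃ a, rX a x ∧ f a = y)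

/-- A bisimulation between graphs. -/
def IsBisimulation {X : Type u} {Y : Type v} (rX : X → X → Prop)
    (rY : Y → Y → Prop) (R : X → Y → Prop) : Prop :=
  ∀ x y, R x y →
    (∀ x', rX x' x → ∃ y', rY y' y ∧ R x' y') ∧
    (∀ y', rY y' y → ∃ x', rX x' x ∧ R x' y')

/-- A bi-entire relation. -/
def BiEntire {X : Type u} {Y : Type v} (R : X → Y → Prop) : Prop :=
  (∀ x, ∃ y, R x y) ∧ (∀ y, ∃ x, R x y)

/-- A well-founded extensional accessible pointed graph ("apg") on a type in universe `u`. -/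
structure WEApg : Type (u + 1) where
  carrier : Type u
  rel : carrier → carrier → Prop
  root : carrier
  acc : ∀ x, Relation.ReflTransGen rel x root
  wf : IsWFRel rel
  ext : IsExtRel rel

/-- Isomorphism of (the underlying pointed graphs of) apgs. -/
def WEApg.Iso (X Y : WEApg.{u}) : Prop :=
  PIso X.rel Y.rel X.root Y.root

/-- Membership of the pointed graph `(W, rW, w)` in the pointed graph `(Y, rY, y)`:
`(W, rW, w)` is isomorphic as a pointed graph to `(Y, rY)/z` for some child `z` of `y`. -/
def MemPGAt {W : Type u} {Y : Type v} (rW : W → W → Prop) (w : W)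
    (rY : Y → Y → Prop) (y : Y) : Prop :=
  ∃ z, rY z y ∧ PIso rW (belowRel rY z) w (belowRoot rY z)

/-- `X ⋿ Y` for apgs: `X` is isomorphic as a pointed graph to `Y/y` for some member
(child of the root) `y` of `Y`. -/
def WEApg.Mem (X Y : WEApg.{u}) : Prop :=
  MemPGAt X.rel X.root Y.rel Y.root


/-! The Mostowski collapse sends a well-founded extensional apg to a ZFC set. Extensionality makes
it injective on nodes and accessibility makes its image the hereditary closure of the root's value,
so pointed isomorphism becomes equality of collapses and `⋿` becomes `∈`. Every ZFC set is the
collapse of the apg of its hereditary members, so the apg of the power set of the collapse of `X`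
is a power set of `X`. -/

open Function

theorem isWFRel_iff_wellFounded {X : Type u} {r : X → X → Prop} : IsWFRel r ↔ WellFounded r :=
  ⟨fun h => ⟨fun x => (Set.eq_univ_iff_forall.1 (h {x | Acc r x} fun x => Acc.intro x)) x⟩,
    fun h _ hS => Set.eq_univ_of_forall fun x => h.induction x hS⟩

theorem exists_equiv_comp_eq_of_range_eq {α β γ : Type*} {f : α → γ} {g : β → γ}
    (hf : Injective f) (hg : Injective g) (h : Set.range f = Set.range g) :
    ∃ e : α ≃ β, ∀ a, g (e a) = f a :=
  ⟨(Equiv.ofInjective f hf).trans ((Equiv.setCongr h).trans (Equiv.ofInjective g hg).symm),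
    fun a => by simp [Equiv.apply_ofInjective_symm]⟩

theorem IsSimulation.of_equiv {X : Type u} {Y : Type v} {rX : X → X → Prop} {rY : Y → Y → Prop}
    (f : X ≃ Y) (hf : ∀ a b, rX a b ↔ rY (f a) (f b)) : IsSimulation rX rY f :=
  ⟨fun a b => (hf a b).1, fun x y hy => ⟨f.symm y, (hf _ x).2 (by simpa using hy), by simp⟩⟩

section Below

variable {X : Type u} {r : X → X → Prop}

theorem isSimulation_below_val (z : X) : IsSimulation (belowRel r z) r Subtype.val :=
  ⟨fun _ _ h => h, fun x y hy => ⟨⟨y, .head hy x.2⟩, hy, rfl⟩⟩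

theorem WellFounded.below (hr : WellFounded r) (z : X) : WellFounded (belowRel r z) :=
  InvImage.wf Subtype.val hr

theorem IsExtRel.below (hext : IsExtRel r) (z : X) : IsExtRel (belowRel r z) := fun a b h =>
  Subtype.ext <| hext a.1 b.1 fun w =>
    ⟨fun hw => (h ⟨w, .head hw a.2⟩).1 hw, fun hw => (h ⟨w, .head hw b.2⟩).2 hw⟩

theorem reflTransGen_belowRel_belowRoot (z : X) (a : Below r z) :
    Relation.ReflTransGen (belowRel r z) a (belowRoot r z) := by
  obtain ⟨x, hx⟩ := a
  induction hx using Relation.ReflTransGen.head_induction_on with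
  | refl => exact .refl
  | head hxy hy ih => exact .head (show belowRel r z ⟨_, .head hxy hy⟩ ⟨_, hy⟩ from hxy) ih

end Below

namespace WellFounded

variable {X : Type u} {r : X → X → Prop} (hr : WellFounded r)

noncomputable def collapse : X → ZFSet.{u} :=
  hr.fix fun x ih => ZFSet.range fun y : {y // r y x} => ih y.1 y.2

theorem mem_collapse {x : X} {t : ZFSet.{u}} :
    t ∈ hr.collapse x ↔ ∃ y, r y x ∧ hr.collapse y = t := by
  rw [collapse, hr.fix_eq, ZFSet.mem_range]
  exact ⟨fun ⟨y, hy⟩ => ⟨y.1, y.2, hy⟩, fun ⟨y, hyx, hy⟩ => ⟨⟨y, hyx⟩, hy⟩⟩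

theorem collapse_eq_of_forall_mem_iff {v : X → ZFSet.{u}}
    (hv : ∀ x t, t ∈ v x ↔ ∃ y, r y x ∧ v y = t) : hr.collapse = v := by
  funext x
  induction x using hr.induction with
  | _ x ih =>
    ext t
    rw [mem_collapse, hv]
    exact exists_congr fun y => and_congr_right fun hy => by rw [ih y hy]

theorem collapse_comp_of_isSimulation {Y : Type u} {rY : Y → Y → Prop} (hrY : WellFounded rY)
    {f : X → Y} (hf : IsSimulation r rY f) : hrY.collapse ∘ f = hr.collapse := by
  refine (hr.collapse_eq_of_forall_mem_iff fun x t => ?_).symm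
  rw [comp_apply, mem_collapse]
  constructor
  · rintro ⟨y, hy, rfl⟩
    obtain ⟨a, ha, rfl⟩ := hf.2 x y hy
    exact ⟨a, ha, rfl⟩
  · rintro ⟨a, ha, rfl⟩
    exact ⟨f a, hf.1 a x ha, rfl⟩

theorem collapse_injective (hext : IsExtRel r) : Injective hr.collapse := by
  intro x
  induction x using hr.induction with
  | _ x ih =>
    intro y hxy
    refine hext x y fun z => ⟨fun hz => ?_, fun hz => ?_⟩
    · obtain ⟨w, hw, hwz⟩ := hr.mem_collapse.1 (hxy ▸ hr.mem_collapse.2 ⟨z, hz, rfl⟩)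
      rwa [ih z hz hwz.symm]
    · obtain ⟨w, hw, hwz⟩ := hr.mem_collapse.1 (hxy ▸ hr.mem_collapse.2 ⟨z, hz, rfl⟩)
      rwa [← ih w hw hwz]

theorem collapse_mem_collapse_iff (hext : IsExtRel r) {a b : X} :
    hr.collapse a ∈ hr.collapse b ↔ r a b := by
  rw [mem_collapse]
  exact ⟨fun ⟨y, hy, hya⟩ => hr.collapse_injective hext hya ▸ hy, fun h => ⟨a, h, rfl⟩⟩

theorem range_collapse_subset {Y : Type u} {rY : Y → Y → Prop} (hrY : WellFounded rY)
    {x₀ : X} {y₀ : Y} (hacc : ∀ x, Relation.ReflTransGen r x x₀)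
    (h : hr.collapse x₀ = hrY.collapse y₀) : Set.range hr.collapse ⊆ Set.range hrY.collapse := by
  rintro _ ⟨x, rfl⟩
  induction hacc x using Relation.ReflTransGen.head_induction_on with
  | refl => exact ⟨y₀, h.symm⟩
  | head hxx' _ ih =>
    obtain ⟨y', hy'⟩ := ih
    obtain ⟨y, -, hy⟩ := hrY.mem_collapse.1 (hy' ▸ hr.mem_collapse.2 ⟨_, hxx', rfl⟩)
    exact ⟨y, hy⟩

end WellFounded

theorem pIso_iff_collapse_eq {X Y : Type u} {rX : X → X → Prop} {rY : Y → Y → Prop}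
    (hX : WellFounded rX) (hY : WellFounded rY) (extX : IsExtRel rX) (extY : IsExtRel rY)
    {x₀ : X} {y₀ : Y} (accX : ∀ x, Relation.ReflTransGen rX x x₀)
    (accY : ∀ y, Relation.ReflTransGen rY y y₀) :
    PIso rX rY x₀ y₀ ↔ hX.collapse x₀ = hY.collapse y₀ := by
  constructor
  · rintro ⟨f, hf, rfl⟩
    exact (congrFun (hX.collapse_comp_of_isSimulation hY (.of_equiv f hf)) x₀).symm
  · intro h
    obtain ⟨e, he⟩ := exists_equiv_comp_eq_of_range_eq (hX.collapse_injective extX)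
      (hY.collapse_injective extY) ((hX.range_collapse_subset hY accX h).antisymm
        (hY.range_collapse_subset hX accY h.symm))
    refine ⟨e, fun a b => ?_, hY.collapse_injective extY (by rw [he, h])⟩
    rw [← hX.collapse_mem_collapse_iff extX, ← hY.collapse_mem_collapse_iff extY, he, he]

namespace WEApg

theorem wellFounded (W : WEApg.{u}) : WellFounded W.rel :=
  isWFRel_iff_wellFounded.1 W.wf

noncomputable def toZFSet (W : WEApg.{u}) : ZFSet.{u} :=
  W.wellFounded.collapse W.root

theorem mem_iff_toZFSet_mem (W Y : WEApg.{u}) : W.Mem Y ↔ W.toZFSet ∈ Y.toZFSet := by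
  rw [Mem, MemPGAt, toZFSet, toZFSet, Y.wellFounded.mem_collapse]
  refine exists_congr fun z => and_congr_right fun _ => ?_
  rw [pIso_iff_collapse_eq W.wellFounded (Y.wellFounded.below z) W.ext (Y.ext.below z) W.acc
    (reflTransGen_belowRel_belowRoot z), eq_comm]
  exact Eq.congr_left
    (congrFun ((Y.wellFounded.below z).collapse_comp_of_isSimulation Y.wellFounded
      (isSimulation_below_val z)) _).symm

end WEApg

namespace ZFSet

theorem rank_le_of_reflTransGen {s t : ZFSet.{u}} (h : Relation.ReflTransGen (· ∈ ·) t s) :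
    rank t ≤ rank s := by
  induction h using Relation.ReflTransGen.head_induction_on with
  | refl => exact le_rfl
  | head htt' _ ih => exact (rank_lt_of_mem htt').le.trans ih

instance small_reflTransGen_mem (s : ZFSet.{u}) :
    Small.{u} {t : ZFSet.{u} // Relation.ReflTransGen (· ∈ ·) t s} :=
  small_of_injective (Subtype.impEmbedding _ (· ∈ V_ (Order.succ (rank s))) fun _ ht =>
    mem_vonNeumann.2 (Order.lt_succ_iff.2 (rank_le_of_reflTransGen ht))).injective

/-- `Shrink` brings the `u`-small type of hereditary members of `s` down to `Type u`. -/
def Nodes (s : ZFSet.{u}) : Type u :=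
  Shrink.{u} {t : ZFSet.{u} // Relation.ReflTransGen (· ∈ ·) t s}

namespace Nodes

variable {s : ZFSet.{u}}

noncomputable def mk (t : ZFSet.{u}) (ht : Relation.ReflTransGen (· ∈ ·) t s) : s.Nodes :=
  equivShrink _ ⟨t, ht⟩

noncomputable def val (a : s.Nodes) : ZFSet.{u} :=
  ((equivShrink _).symm a).1

theorem reflTransGen_val (a : s.Nodes) : Relation.ReflTransGen (· ∈ ·) a.val s :=
  ((equivShrink _).symm a).2

@[simp]
theorem val_mk (t : ZFSet.{u}) (ht : Relation.ReflTransGen (· ∈ ·) t s) : (mk t ht).val = t := by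
  simp [mk, val]

theorem mk_val (a : s.Nodes) : mk a.val a.reflTransGen_val = a :=
  (equivShrink _).apply_symm_apply a

theorem val_injective : Injective (val (s := s)) :=
  Subtype.val_injective.comp (equivShrink _).symm.injective

theorem exists_val_eq_of_mem {b : s.Nodes} {t : ZFSet.{u}} (ht : t ∈ b.val) :
    ∃ a : s.Nodes, a.val = t :=
  ⟨mk t (.head ht b.reflTransGen_val), val_mk _ _⟩

theorem mem_val_iff {b : s.Nodes} {t : ZFSet.{u}} :
    t ∈ b.val ↔ ∃ a : s.Nodes, a.val ∈ b.val ∧ a.val = t :=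
  ⟨fun ht => (exists_val_eq_of_mem ht).imp fun a (ha : a.val = t) => ⟨ha ▸ ht, ha⟩,
    fun ⟨_, ha, hat⟩ => hat ▸ ha⟩

theorem reflTransGen_mk (t : ZFSet.{u}) (ht : Relation.ReflTransGen (· ∈ ·) t s) :
    Relation.ReflTransGen (fun a b : s.Nodes => a.val ∈ b.val) (mk t ht) (mk s .refl) := by
  induction ht using Relation.ReflTransGen.head_induction_on with
  | refl => exact .refl
  | head htt' ht' ih => exact .head (by simpa using htt') ih

end Nodes

end ZFSet

namespace WEApg

noncomputable def ofZFSet (s : ZFSet.{u}) : WEApg.{u} where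
  carrier := s.Nodes
  rel a b := a.val ∈ b.val
  root := .mk s .refl
  acc a := ZFSet.Nodes.mk_val a ▸ ZFSet.Nodes.reflTransGen_mk _ a.reflTransGen_val
  wf := isWFRel_iff_wellFounded.2 (InvImage.wf _ ZFSet.mem_wf)
  ext a b h := ZFSet.Nodes.val_injective <| ZFSet.ext fun t => by
    rw [ZFSet.Nodes.mem_val_iff, ZFSet.Nodes.mem_val_iff]
    exact exists_congr fun c => and_congr_left fun _ => h c

theorem toZFSet_ofZFSet (s : ZFSet.{u}) : (ofZFSet s).toZFSet = s := by
  have hval : (ofZFSet s).wellFounded.collapse = ZFSet.Nodes.val :=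
    (ofZFSet s).wellFounded.collapse_eq_of_forall_mem_iff fun _ _ => ZFSet.Nodes.mem_val_iff
  rw [toZFSet, hval]
  exact ZFSet.Nodes.val_mk s .refl

theorem toZFSet_surjective : Surjective toZFSet.{u} :=
  fun s => ⟨ofZFSet s, toZFSet_ofZFSet s⟩

end WEApg

/-- Power sets exist for well-founded extensional apgs. -/
theorem weapg_powerset (X : WEApg.{u}) :
    ∃ P : WEApg.{u}, ∀ W : WEApg.{u},
      W.Mem P ↔ ∀ Z : WEApg.{u}, Z.Mem W → Z.Mem X := by
  refine ⟨WEApg.ofZFSet X.toZFSet.powerset, fun W => ?_⟩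
  simp only [WEApg.mem_iff_toZFSet_mem, WEApg.toZFSet_ofZFSet, ZFSet.mem_powerset]
  refine ⟨fun h Z hZ => h hZ, fun h t ht => ?_⟩
  obtain ⟨Z, rfl⟩ := WEApg.toZFSet_surjective t
  exact h Z ht
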